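/- Consider ASP with a = (2ℓ-p)/ℓ applied to y = Mx + e with x ℓ-cosparse. If the ACoSaMP per-iteration bound ‖x - Q_{Λ̂^t}w‖₂ ≤ ρ₁ρ₂‖x - x̂^{t-1}_{ASP}‖₂ + (η₁ + ρ₁η₂)‖e‖₂ holds, then the ASP estimate x̂^t_{ASP} = argmin ‖y - Mx̃‖₂² s.t. Ω_{Λ̂^t}x̃ = 0 satisfies ‖x - x̂^t_{ASP}‖₂ ≤ ((1+δ_{2ℓ-p})/(1-δ_{2ℓ-p}))ρ₁ρ₂‖x - x̂^{t-1}_{ASP}‖₂ + ((1+δ_{2ℓ-p})/(1-δ_{2ℓ-p})(η₁ + ρ₁η₂) + 2/(1-δ_{2ℓ-p}))‖e‖₂. -/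

import Mathlib

/-! The estimate `xt` fits the data `y = M x + e` at least as well as the competitor `Q_Λ w`, which
lies in the same null space, so `‖M (x - xt)‖ ≤ ‖M (x - Q_Λ w)‖ + 2‖e‖`. Both differences are
`(2ℓ - p)`-cosparse, so the Ω-RIP turns this into `(1 - δ)‖x - xt‖ ≤ (1 + δ)‖x - Q_Λ w‖ + 2‖e‖`,
and the ACoSaMP bound on `‖x - Q_Λ w‖` finishes the argument. -/

noncomputable section

abbrev Evec (d : ℕ) := EuclideanSpace ℝ (Fin d)

def nullSp {d p : ℕ} (Om : Evec d →L[ℝ] Evec p) (Λ : Finset (Fin p)) : Submodule ℝ (Evec d) where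
  carrier := {x | ∀ i ∈ Λ, Om x i = 0}
  zero_mem' := by intro i _; simp
  add_mem' := by intro a b ha hb i hi; simp [ha i hi, hb i hi]
  smul_mem' := by intro c a ha i hi; simp [ha i hi]

def Qp {d p : ℕ} (Om : Evec d →L[ℝ] Evec p) (Λ : Finset (Fin p)) : Evec d →L[ℝ] Evec d :=
  (nullSp Om Λ).subtypeL ∘L Submodule.orthogonalProjection (nullSp Om Λ)

def Cosparse {d p : ℕ} (Om : Evec d →L[ℝ] Evec p) (ℓ : ℕ) (v : Evec d) : Prop :=
  ℓ ≤ {i : Fin p | Om v i = 0}.ncard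

def ORIP {d m p : ℕ} (M : Evec d →L[ℝ] Evec m) (Om : Evec d →L[ℝ] Evec p) (ℓ : ℕ) (δ : ℝ) : Prop :=
  ∀ v : Evec d, Cosparse Om ℓ v →
    (1 - δ) * ‖v‖ ^ 2 ≤ ‖M v‖ ^ 2 ∧ ‖M v‖ ^ 2 ≤ (1 + δ) * ‖v‖ ^ 2

lemma Set.ncard_add_ncard_sub_card_le_ncard_inter {α : Type*} [Fintype α] (s t : Set α) :
    s.ncard + t.ncard - Fintype.card α ≤ (s ∩ t).ncard := by
  have hunion : (s ∪ t).ncard ≤ Fintype.card α := by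
    simpa [Nat.card_eq_fintype_card] using Set.ncard_le_card (s ∪ t)
  have := Set.ncard_union_add_ncard_inter s t
  omega

lemma Qp_mem_nullSp {d p : ℕ} (Om : Evec d →L[ℝ] Evec p) (Λ : Finset (Fin p)) (w : Evec d) :
    Qp Om Λ w ∈ nullSp Om Λ :=
  Submodule.coe_mem _

/-- Two co-supports of size at least `ℓ` inside `Fin p` share at least `2ℓ - p` indices. -/
lemma Cosparse.sub_of_mem_nullSp {d p ℓ : ℕ} {Om : Evec d →L[ℝ] Evec p} {Λ : Finset (Fin p)}
    {u v : Evec d} (hu : Cosparse Om ℓ u) (hΛ : ℓ ≤ Λ.card) (hv : v ∈ nullSp Om Λ) :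
    Cosparse Om (2 * ℓ - p) (u - v) := by
  have hinter : {i | Om u i = 0} ∩ ↑Λ ⊆ {i : Fin p | Om (u - v) i = 0} := by
    rintro i ⟨hui, hi⟩
    simp [hui.out, hv i hi]
  have hcount := Set.ncard_add_ncard_sub_card_le_ncard_inter {i | Om u i = 0} (Λ : Set (Fin p))
  rw [Set.ncard_coe_finset, Fintype.card_fin] at hcount
  unfold Cosparse at hu ⊢
  exact le_trans (by omega) ((Set.ncard_le_ncard hinter).trans' hcount)

namespace ORIP

variable {d m p s : ℕ} {M : Evec d →L[ℝ] Evec m} {Om : Evec d →L[ℝ] Evec p} {δ : ℝ}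
  {v : Evec d}

/-- Since `0 ≤ 1 - δ ≤ 1`, `((1 - δ) ‖v‖)² ≤ (1 - δ) ‖v‖²`, so no square root is needed. -/
lemma sub_mul_norm_le (h : ORIP M Om s δ) (hδ₀ : 0 ≤ δ) (hδ₁ : δ ≤ 1) (hv : Cosparse Om s v) :
    (1 - δ) * ‖v‖ ≤ ‖M v‖ := by
  refine le_of_sq_le_sq ?_ (norm_nonneg _)
  calc ((1 - δ) * ‖v‖) ^ 2 = (1 - δ) * ((1 - δ) * ‖v‖ ^ 2) := by ring
    _ ≤ 1 * ((1 - δ) * ‖v‖ ^ 2) := by gcongr; linarith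
    _ ≤ ‖M v‖ ^ 2 := by rw [one_mul]; exact (h v hv).1

lemma norm_le_add_mul (h : ORIP M Om s δ) (hδ : 0 ≤ δ) (hv : Cosparse Om s v) :
    ‖M v‖ ≤ (1 + δ) * ‖v‖ := by
  refine le_of_sq_le_sq ?_ (by positivity)
  calc ‖M v‖ ^ 2 ≤ (1 + δ) * ‖v‖ ^ 2 := (h v hv).2
    _ ≤ (1 + δ) * ((1 + δ) * ‖v‖ ^ 2) := by gcongr; nlinarith
    _ = ((1 + δ) * ‖v‖) ^ 2 := by ring

end ORIP

lemma norm_sub_le_norm_sub_add_two_mul {E : Type*} [SeminormedAddCommGroup E] {u e a b : E}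
    (hfit : ‖u + e - a‖ ≤ ‖u + e - b‖) : ‖u - a‖ ≤ ‖u - b‖ + 2 * ‖e‖ := by
  calc ‖u - a‖ = ‖(u + e - a) - e‖ := by congr 1; abel
    _ ≤ ‖u + e - b‖ + ‖e‖ := (norm_sub_le _ _).trans (by gcongr)
    _ = ‖(u - b) + e‖ + ‖e‖ := by congr 2; abel
    _ ≤ ‖u - b‖ + 2 * ‖e‖ := by linarith [norm_add_le (u - b) e]

/-- ASP iteration bound (Theorem 6.9): given the ACoSaMP per-iteration bound for the
intermediate estimate Q_{Λ̂ᵗ}w, the objective-aware ASP estimate satisfies a similar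
bound with constants inflated by (1+δ_{2ℓ-p})/(1-δ_{2ℓ-p}). -/
theorem stmt13 {d m p ℓ : ℕ} (M : Evec d →L[ℝ] Evec m) (Om : Evec d →L[ℝ] Evec p)
    (x xprev w xt : Evec d) (e y : Evec m) (Λh : Finset (Fin p))
    (δ ρ₁ ρ₂ η₁ η₂ : ℝ)
    (hy : y = M x + e)
    (hx : Cosparse Om ℓ x)
    (hΛcard : ℓ ≤ Λh.card)
    (hbound : ‖x - Qp Om Λh w‖ ≤ ρ₁ * ρ₂ * ‖x - xprev‖ + (η₁ + ρ₁ * η₂) * ‖e‖)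
    (hxt1 : xt ∈ nullSp Om Λh)
    (hxt2 : ∀ v ∈ nullSp Om Λh, ‖y - M xt‖ ≤ ‖y - M v‖)
    (hrip : ORIP M Om (2 * ℓ - p) δ)
    (hδ0 : 0 ≤ δ) (hδ1 : δ < 1) :
    ‖x - xt‖ ≤ ((1 + δ) / (1 - δ)) * (ρ₁ * ρ₂) * ‖x - xprev‖
      + (((1 + δ) / (1 - δ)) * (η₁ + ρ₁ * η₂) + 2 / (1 - δ)) * ‖e‖ := by
  set q := Qp Om Λh w
  have hq : q ∈ nullSp Om Λh := Qp_mem_nullSp Om Λh w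
  have key : (1 - δ) * ‖x - xt‖ ≤ (1 + δ) * ‖x - q‖ + 2 * ‖e‖ :=
    calc (1 - δ) * ‖x - xt‖ ≤ ‖M (x - xt)‖ :=
          hrip.sub_mul_norm_le hδ0 hδ1.le (hx.sub_of_mem_nullSp hΛcard hxt1)
      _ ≤ ‖M (x - q)‖ + 2 * ‖e‖ := by
          simpa only [map_sub] using norm_sub_le_norm_sub_add_two_mul (hy ▸ hxt2 q hq)
      _ ≤ (1 + δ) * ‖x - q‖ + 2 * ‖e‖ := by
          gcongr; exact hrip.norm_le_add_mul hδ0 (hx.sub_of_mem_nullSp hΛcard hq)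
  have hpos : 0 < 1 - δ := by linarith
  calc ‖x - xt‖ = (1 - δ) * ‖x - xt‖ / (1 - δ) := by field_simp
    _ ≤ ((1 + δ) * (ρ₁ * ρ₂ * ‖x - xprev‖ + (η₁ + ρ₁ * η₂) * ‖e‖) + 2 * ‖e‖) / (1 - δ) := by
        gcongr
        exact key.trans (by gcongr)
    _ = _ := by field_simp; ring
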